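/- arXiv:2407.19227 — 3 statements merged into one kernel-verified Lean document; each statement's English description precedes it below -/
import Mathlib

section
/- Let G(u,t) = exp(∑_{j=1}^k (Λ_j(t)(u^j − 1) + T_j(t)(u^{−j} − 1))) for u > 0. Then for every r ≥ 1, the r-th derivative of G with respect to u, evaluated at u = 1, satisfies the recursion: G^{(r)}(1,t) = ∑_{m=0}^{r-1} C(r-1, m) G^{(m)}(1,t) · ∑_{j=1}^k [Λ_j(t) P(j, r−m) + T_j(t) P(−j, r−m)], where P(a,b) = a(a−1)···(a−b+1) is the falling factorial. -/
/-!
Writing `G = exp ∘ f`, we have `G' = G · f'`, so the Leibniz rule applied to `(G')^{(r-1)}`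
gives `G^{(r)} = ∑ₘ C(r-1, m) G^{(m)} f^{(r-m)}`. The exponent `f` is a linear combination of
`u ↦ u ^ (±j) - 1`, and the `b`-th derivative of `u ↦ u ^ a` at `u = 1` is the falling
factorial `P(a, b)`, which yields the bracket.
-/

/-- Falling factorial `P(a,b) = a(a-1)⋯(a-b+1)` for real `a`. -/
noncomputable def fallingFactorial (a : ℝ) (b : ℕ) : ℝ :=
  ∏ i ∈ Finset.range b, (a - i)

open Finset Topology

theorem contDiffAt_zpow_of_ne_zero {𝕜 : Type*} [NontriviallyNormedField 𝕜] [CompleteSpace 𝕜]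
    {x : 𝕜} (m : ℤ) (hx : x ≠ 0) {n : WithTop ℕ∞} :
    ContDiffAt 𝕜 n (fun u => u ^ m) x :=
  (analyticAt_id.zpow hx).contDiffAt

theorem iteratedDeriv_zpow (m : ℤ) (b : ℕ) (x : ℝ) :
    iteratedDeriv b (fun u : ℝ => u ^ m) x = fallingFactorial m b * x ^ (m - b) := by
  rw [iteratedDeriv_eq_iterate, iter_deriv_zpow, fallingFactorial]

theorem iteratedDeriv_const_mul_zpow_sub_one (c : ℝ) (m : ℤ) {b : ℕ} (hb : 0 < b) {x : ℝ}
    (hx : x ≠ 0) :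
    iteratedDeriv b (fun u : ℝ => c * (u ^ m - 1)) x =
      c * fallingFactorial m b * x ^ (m - b) := by
  rw [iteratedDeriv_const_mul_field,
    iteratedDeriv_fun_sub (contDiffAt_zpow_of_ne_zero m hx) contDiffAt_const,
    iteratedDeriv_zpow, iteratedDeriv_const, if_neg hb.ne', sub_zero, mul_assoc]

theorem iteratedDeriv_succ_exp_comp {f : ℝ → ℝ} {x : ℝ} {n : ℕ}
    (hf : ContDiffAt ℝ (n + 1) f x) :
    iteratedDeriv (n + 1) (fun u => Real.exp (f u)) x =
      ∑ m ∈ range (n + 1), (n.choose m : ℝ) * iteratedDeriv m (fun u => Real.exp (f u)) x *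
        iteratedDeriv (n + 1 - m) f x := by
  have hderiv : deriv (fun u => Real.exp (f u)) =ᶠ[𝓝 x] fun u => Real.exp (f u) * deriv f u := by
    filter_upwards [hf.eventually (by simp)] with y hy
    exact deriv_exp (hy.differentiableAt (by simp))
  rw [iteratedDeriv_succ', hderiv.iteratedDeriv_eq,
    iteratedDeriv_fun_mul (hf.of_le (by simp)).exp (hf.derivWithin le_rfl)]
  refine sum_congr rfl fun m hm => ?_
  rw [← iteratedDeriv_succ', show n - m + 1 = n + 1 - m by grind]

theorem ngsp_factorial_moment_recursion_general (k : ℕ) (Λ T : ℕ → ℝ)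
    (G : ℝ → ℝ)
    (hG : G = fun u : ℝ => Real.exp (∑ j ∈ Finset.Icc 1 k,
        (Λ j * (u ^ (j : ℤ) - 1) + T j * (u ^ (-(j : ℤ)) - 1))))
    (r : ℕ) (hr : 1 ≤ r) :
    iteratedDeriv r G 1 =
      ∑ m ∈ Finset.range r, ((r - 1).choose m : ℝ) * iteratedDeriv m G 1 *
        (∑ j ∈ Finset.Icc 1 k,
          (Λ j * fallingFactorial (j : ℝ) (r - m) + T j * fallingFactorial (-(j : ℝ)) (r - m))) := by
  obtain ⟨n, rfl⟩ : ∃ n, r = n + 1 := ⟨r - 1, by omega⟩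
  have hzpow (m : ℤ) (N : WithTop ℕ∞) : ContDiffAt ℝ N (fun u : ℝ => u ^ m) 1 :=
    contDiffAt_zpow_of_ne_zero m one_ne_zero
  subst hG
  rw [iteratedDeriv_succ_exp_comp (by fun_prop), Nat.add_sub_cancel]
  refine sum_congr rfl fun m hm => ?_
  have hpos : 0 < n + 1 - m := by grind
  rw [iteratedDeriv_fun_sum fun j _ => by fun_prop]
  congr 1
  refine sum_congr rfl fun j _ => ?_
  rw [iteratedDeriv_fun_add (by fun_prop) (by fun_prop),
    iteratedDeriv_const_mul_zpow_sub_one _ _ hpos one_ne_zero,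
    iteratedDeriv_const_mul_zpow_sub_one _ _ hpos one_ne_zero]
  simp only [one_zpow, mul_one, Int.cast_natCast, Int.cast_neg]

theorem ngsp_factorial_moment_recursion (k : ℕ) (Λ T : ℕ → ℝ)
    (hΛ : ∀ j, 0 ≤ Λ j) (hT : ∀ j, 0 ≤ T j)
    (G : ℝ → ℝ)
    (hG : G = fun u : ℝ => Real.exp (∑ j ∈ Finset.Icc 1 k,
        (Λ j * (u ^ (j : ℤ) - 1) + T j * (u ^ (-(j : ℤ)) - 1))))
    (r : ℕ) (hr : 1 ≤ r) :
    iteratedDeriv r G 1 =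
      ∑ m ∈ Finset.range r, ((r - 1).choose m : ℝ) * iteratedDeriv m G 1 *
        (∑ j ∈ Finset.Icc 1 k,
          (Λ j * fallingFactorial (j : ℝ) (r - m) + T j * fallingFactorial (-(j : ℝ)) (r - m))) :=
  ngsp_factorial_moment_recursion_general k Λ T G hG r hr
end

section
/- Let F̃_n(t) = (Λ(t))^{nα} E_{α, nα+1}^{n}(−(Λ(t))^α) for n ≥ 0 with F̃_0(t) = 1. Then for all n ≥ 0, F̃_n(t) − F̃_{n+1}(t) = (Λ(t))^{nα} E_{α, nα+1}^{n+1}(−(Λ(t))^α), which is the pmf p̃(n,t) of the non-homogeneous time fractional Poisson process N(Y_α(Λ(t))). -/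
open scoped Nat

/-- Three-parameter (Prabhakar) Mittag-Leffler function. -/
noncomputable def prabhakar (α β δ z : ℝ) : ℝ :=
  ∑' n : ℕ, (∏ i ∈ Finset.range n, (δ + i)) * z ^ n / ((n ! : ℝ) * Real.Gamma (α * n + β))

/-!
With `z = -Λ^α`, the Pochhammer identity `(δ+1)_{m+1} - (δ)_{m+1} = (m+1) (δ+1)_m` gives,
term by term, `E^{δ+1}_{α,β}(z) = E^δ_{α,β}(z) + z E^{δ+1}_{α,β+α}(z)`; the three series converge
by the ratio test, since log-convexity of `Γ` gives `Γ(x+α) ≥ (x-1)^α Γ(x)`. Taking `δ = n`,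
`β = nα + 1` and multiplying by `Λ^{nα}` yields `F n - F (n+1)`, and `(n+1)_m = (m+n)!/n!`
turns the result into the pmf series.
-/

open Filter Finset Real

theorem Real.sub_one_rpow_mul_Gamma_le_Gamma_add {x a : ℝ} (hx : 1 < x) (ha : 0 < a) :
    (x - 1) ^ a * Gamma x ≤ Gamma (x + a) := by
  have hslope := convexOn_log_Gamma.slope_mono_adjacent (x := x - 1) (y := x) (z := x + a)
    (Set.mem_Ioi.2 (by linarith)) (Set.mem_Ioi.2 (by linarith)) (by linarith) (by linarith)
  -- the slope of `log ∘ Γ` on `[x - 1, x]` is `log (x - 1)`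
  have hΓx : Gamma x = (x - 1) * Gamma (x - 1) := by
    simpa using Gamma_add_one (s := x - 1) (by linarith)
  have hΓ₀ : 0 < Gamma (x - 1) := Gamma_pos_of_pos (by linarith)
  have hΓ : 0 < Gamma (x + a) := Gamma_pos_of_pos (by linarith)
  simp only [Function.comp_apply, sub_sub_cancel, div_one, add_sub_cancel_left, hΓx,
    log_mul (sub_pos.2 hx).ne' hΓ₀.ne', add_sub_cancel_right] at hslope
  rw [← log_le_log_iff (by positivity) hΓ, hΓx, log_mul (by positivity) (by positivity),
    log_mul (sub_pos.2 hx).ne' hΓ₀.ne', log_rpow (sub_pos.2 hx)]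
  rw [le_div_iff₀ ha] at hslope
  linarith

noncomputable def prabhakarTerm (α β δ z : ℝ) (m : ℕ) : ℝ :=
  (∏ i ∈ range m, (δ + i)) * z ^ m / ((m ! : ℝ) * Gamma (α * m + β))

theorem prabhakar_eq_tsum (α β δ z : ℝ) : prabhakar α β δ z = ∑' m, prabhakarTerm α β δ z m :=
  rfl

theorem prabhakarTerm_zero (α β δ z : ℝ) : prabhakarTerm α β δ z 0 = (Gamma β)⁻¹ := by
  simp [prabhakarTerm]

theorem prabhakarTerm_succ (α β δ z : ℝ) {m : ℕ} (hΓ : Gamma (α * m + β) ≠ 0) :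
    prabhakarTerm α β δ z (m + 1) = prabhakarTerm α β δ z m * ((δ + m) * z / (m + 1)) *
      (Gamma (α * m + β) / Gamma (α * m + β + α)) := by
  have harg : α * ((m + 1 : ℕ) : ℝ) + β = α * m + β + α := by push_cast; ring
  simp only [prabhakarTerm, harg, prod_range_succ, pow_succ, Nat.factorial_succ]
  push_cast
  generalize Gamma (α * m + β) = g at hΓ ⊢
  field_simp

theorem factorial_mul_prod_range_add_one_add (n m : ℕ) :
    (n ! : ℝ) * ∏ i ∈ range m, ((n : ℝ) + 1 + i) = ((m + n)! : ℝ) := by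
  rw [add_comm m, ← Nat.factorial_mul_ascFactorial, Nat.ascFactorial_eq_prod_range]
  push_cast
  rfl

theorem summable_prabhakarTerm {α : ℝ} (hα : 0 < α) (β δ z : ℝ) :
    Summable (prabhakarTerm α β δ z) := by
  set C := (|δ| + 1) * |z|
  have hx : Tendsto (fun m : ℕ => α * m + β - 1) atTop atTop := by
    simpa only [add_sub_assoc] using
      tendsto_atTop_add_const_right _ (β - 1) (tendsto_natCast_atTop_atTop.const_mul_atTop hα)
  have hsmall : ∀ᶠ m : ℕ in atTop, C * (α * m + β - 1) ^ (-α) < 1 / 2 := by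
    have h := ((tendsto_rpow_neg_atTop hα).comp hx).const_mul C
    rw [mul_zero] at h
    exact h.eventually (gt_mem_nhds (by norm_num))
  refine summable_of_ratio_norm_eventually_le (r := 1 / 2) (by norm_num) ?_
  filter_upwards [hsmall, hx.eventually_gt_atTop 0] with m hm_small hm_pos
  set x := α * m + β
  have hΓx : 0 < Gamma x := Gamma_pos_of_pos (by linarith)
  have hΓxα : 0 < Gamma (x + α) := Gamma_pos_of_pos (by linarith)
  have hGamma : Gamma x / Gamma (x + α) ≤ (x - 1) ^ (-α) := by
    rw [div_le_iff₀ hΓxα, rpow_neg (by linarith), inv_mul_eq_div,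
      le_div_iff₀ (rpow_pos_of_pos (by linarith) _)]
    simpa only [mul_comm] using sub_one_rpow_mul_Gamma_le_Gamma_add (by linarith) hα
  have hcoef : ‖(δ + m) * z / (m + 1)‖ ≤ C := by
    have hδm : |δ + m| ≤ (|δ| + 1) * (m + 1) := by
      have := abs_add_le δ m
      rw [Nat.abs_cast] at this
      nlinarith [abs_nonneg δ, (m.cast_nonneg : (0 : ℝ) ≤ m)]
    rw [norm_div, norm_mul, Real.norm_eq_abs, Real.norm_eq_abs, Real.norm_eq_abs,
      abs_of_pos (by positivity : (0 : ℝ) < m + 1), div_le_iff₀ (by positivity)]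
    nlinarith [abs_nonneg z]
  rw [prabhakarTerm_succ α β δ z hΓx.ne', norm_mul, norm_mul,
    Real.norm_of_nonneg (div_nonneg hΓx.le hΓxα.le)]
  calc ‖prabhakarTerm α β δ z m‖ * ‖(δ + m) * z / (m + 1)‖ * (Gamma x / Gamma (x + α))
      ≤ ‖prabhakarTerm α β δ z m‖ * C * (x - 1) ^ (-α) := by gcongr
    _ ≤ 1 / 2 * ‖prabhakarTerm α β δ z m‖ := by nlinarith [norm_nonneg (prabhakarTerm α β δ z m)]

theorem prabhakarTerm_add_one_succ_sub (α β δ z : ℝ) (m : ℕ) :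
    prabhakarTerm α β (δ + 1) z (m + 1) - prabhakarTerm α β δ z (m + 1) =
      z * prabhakarTerm α (β + α) (δ + 1) z m := by
  have hprod : ∏ i ∈ range (m + 1), (δ + i) = δ * ∏ i ∈ range m, (δ + 1 + i) := by
    rw [prod_range_succ', mul_comm]
    push_cast
    simp only [add_zero, add_assoc, add_comm (1 : ℝ)]
  have harg : α * ((m + 1 : ℕ) : ℝ) + β = α * m + (β + α) := by push_cast; ring
  simp only [prabhakarTerm, hprod, harg, prod_range_succ, pow_succ, Nat.factorial_succ]
  push_cast
  field_simp
  ring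

theorem prabhakar_add_one {α : ℝ} (hα : 0 < α) (β δ z : ℝ) :
    prabhakar α β (δ + 1) z = prabhakar α β δ z + z * prabhakar α (β + α) (δ + 1) z := by
  have hsucc := summable_prabhakarTerm hα β (δ + 1) z
  have hself := summable_prabhakarTerm hα β δ z
  rw [prabhakar_eq_tsum, prabhakar_eq_tsum, prabhakar_eq_tsum, ← sub_eq_iff_eq_add',
    ← hsucc.tsum_sub hself, (hsucc.sub hself).tsum_eq_zero_add, ← tsum_mul_left]
  simp only [prabhakarTerm_zero, sub_self, zero_add, prabhakarTerm_add_one_succ_sub]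

theorem prabhakar_natCast_add_one (α β z : ℝ) (n : ℕ) :
    prabhakar α β (n + 1) z =
      (n ! : ℝ)⁻¹ * ∑' m : ℕ, ((m + n)! / m ! : ℝ) * z ^ m / Gamma (α * m + β) := by
  rw [prabhakar, ← tsum_mul_left]
  refine tsum_congr fun m => ?_
  rw [← factorial_mul_prod_range_add_one_add]
  field_simp

theorem ntfpp_pmf_from_arrival_times (α : ℝ) (hα : α ∈ Set.Ioc (0 : ℝ) 1)
    (Λ : ℝ) (hΛ : 0 ≤ Λ)
    (F : ℕ → ℝ)
    (hF : ∀ n : ℕ, F n = Λ ^ ((n : ℝ) * α) * prabhakar α ((n : ℝ) * α + 1) (n : ℝ) (-(Λ ^ α)))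
    (n : ℕ) :
    F n - F (n + 1) =
      Λ ^ ((n : ℝ) * α) * prabhakar α ((n : ℝ) * α + 1) ((n : ℝ) + 1) (-(Λ ^ α))
    ∧ Λ ^ ((n : ℝ) * α) * prabhakar α ((n : ℝ) * α + 1) ((n : ℝ) + 1) (-(Λ ^ α))
      = Λ ^ ((n : ℝ) * α) / (n ! : ℝ) *
          ∑' m : ℕ, (((m + n)! : ℝ) / (m ! : ℝ)) * (-(Λ ^ α)) ^ m /
            Real.Gamma (((m : ℝ) + n) * α + 1) := by
  obtain ⟨hα₀, -⟩ := hα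
  constructor
  · have hpow : Λ ^ (((n + 1 : ℕ) : ℝ) * α) = Λ ^ ((n : ℝ) * α) * Λ ^ α := by
      rw [Nat.cast_succ, add_one_mul, rpow_add' hΛ (by positivity)]
    have hβ : ((n + 1 : ℕ) : ℝ) * α + 1 = (n : ℝ) * α + 1 + α := by push_cast; ring
    rw [hF, hF, hpow, hβ, Nat.cast_succ, prabhakar_add_one hα₀ ((n : ℝ) * α + 1) n]
    ring
  · have hΓ : ∀ m : ℕ, ((m : ℝ) + n) * α + 1 = α * m + ((n : ℝ) * α + 1) := fun m => by ring
    simp_rw [prabhakar_natCast_add_one, hΓ]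
    ring
end

section
/- Let G_j ~ Geometric with success probability p = Λ_j(t)/Λ(t) (support {1,2,...}), and for n ≥ 1 set F̃_n(t) = (Λ(t))^{nα} E_{α,nα+1}^n(−(Λ(t))^α). Then ∑_{n=1}^∞ F̃_n(t) p (1−p)^{n−1} = Λ_j(t)(Λ(t))^{α−1} E_{α,α+1}(−Λ_j(t)(Λ(t))^{α−1}). -/
open scoped Nat

/-!
Expanding `x^(n+1) E^{n+1}_{α,(n+1)α+1}(-x) = ∑ₖ C(n+k,k) (-1)^k x^(n+k+1) / Γ(α(n+k+1)+1)`
and summing against the geometric weights `w^n` gives a double series over `(n, k)`. It converges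
absolutely because `1 / Γ(αm + c)` decays faster than any geometric sequence. Regrouping it along
the antidiagonals `n + k = m` turns the inner sums into binomial expansions of `(w - 1)^m`, which
leaves `x E_{α,α+1}((w - 1) x)`; with `w = 1 - p` and `x = Λ^α` this is the claimed formula.
-/

open Finset Filter Topology

section Antidiagonal

variable {A : Type*} [AddMonoid A] [HasAntidiagonal A]

theorem summable_of_nonneg_of_summable_sum_antidiagonal {f : A × A → ℝ} (hf : 0 ≤ f)
    (h : Summable fun m => ∑ ij ∈ antidiagonal m, f ij) : Summable f := by
  refine HasAntidiagonal.sigmaAntidiagonalEquivProd.summable_iff.mp <|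
    (summable_sigma_of_nonneg fun _ => hf _).mpr ⟨fun _ => Summable.of_finite, h.congr fun m => ?_⟩
  exact (Finset.tsum_subtype (antidiagonal m) f).symm

theorem Summable.tsum_eq_tsum_sum_antidiagonal {M : Type*} [AddCommGroup M] [UniformSpace M]
    [IsUniformAddGroup M] [CompleteSpace M] [T0Space M] {f : A × A → M} (hf : Summable f) :
    ∑' ij, f ij = ∑' m, ∑ ij ∈ antidiagonal m, f ij := by
  rw [← HasAntidiagonal.sigmaAntidiagonalEquivProd.tsum_eq]
  exact (HasAntidiagonal.sigmaAntidiagonalEquivProd.summable_iff.mpr hf).tsum_sigma.trans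
    (tsum_congr fun m => Finset.tsum_subtype (antidiagonal m) f)

end Antidiagonal

namespace Real

theorem Gamma_mul_rpow_le_Gamma_add {y a : ℝ} (hy : 1 < y) (ha : 0 < a) :
    Gamma y * (y - 1) ^ a ≤ Gamma (y + a) := by
  have hy1 : 0 < y - 1 := by linarith
  have hslope := convexOn_log_Gamma.slope_mono_adjacent (x := y - 1) (y := y) (z := y + a)
    (Set.mem_Ioi.mpr hy1) (Set.mem_Ioi.mpr (by linarith)) (by linarith) (by linarith)
  have hΓy : Gamma y = (y - 1) * Gamma (y - 1) := by
    simpa using Gamma_add_one hy1.ne'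
  have hΓ1 : 0 < Gamma (y - 1) := Gamma_pos_of_pos hy1
  have hlog : log (Gamma y) - log (Gamma (y - 1)) = log (y - 1) := by
    rw [hΓy, log_mul hy1.ne' hΓ1.ne']; ring
  simp only [Function.comp, sub_sub_cancel, add_sub_cancel_left, div_one, hlog] at hslope
  rw [le_div_iff₀ ha] at hslope
  have hΓy_pos : 0 < Gamma y := Gamma_pos_of_pos (by linarith)
  rw [← log_le_log_iff (by positivity) (Gamma_pos_of_pos (by linarith)),
    log_mul hΓy_pos.ne' (by positivity), log_rpow hy1]
  linarith

theorem summable_pow_div_Gamma {α c : ℝ} (hα : 0 < α) (hc : 0 < c) (x : ℝ) :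
    Summable fun m : ℕ => x ^ m / Gamma (α * m + c) := by
  have harg : Tendsto (fun n : ℕ => α * n + c) atTop atTop :=
    tendsto_atTop_add_const_right _ _ (tendsto_natCast_atTop_atTop.const_mul_atTop hα)
  have hratio : Tendsto (fun n : ℕ => |x| / (α * n + c - 1) ^ α) atTop (𝓝 0) :=
    tendsto_const_nhds.div_atTop <| (tendsto_rpow_atTop hα).comp <|
      tendsto_atTop_add_const_right _ _ harg
  refine summable_of_ratio_norm_eventually_le (r := 1 / 2) (by norm_num) ?_
  filter_upwards [harg.eventually_gt_atTop 1,
    hratio.eventually_le_const (by norm_num : (0 : ℝ) < 1 / 2)] with n hn hsmall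
  have hΓ : 0 < Gamma (α * n + c) := Gamma_pos_of_pos (by linarith)
  have hnext : α * ((n + 1 : ℕ) : ℝ) + c = α * n + c + α := by push_cast; ring
  rw [norm_div, norm_div, norm_pow, norm_pow, hnext, norm_of_nonneg hΓ.le,
    norm_of_nonneg (Gamma_pos_of_pos (by linarith)).le, norm_eq_abs]
  calc |x| ^ (n + 1) / Gamma (α * n + c + α)
      ≤ |x| ^ (n + 1) / (Gamma (α * n + c) * (α * n + c - 1) ^ α) :=
        div_le_div_of_nonneg_left (by positivity) (by positivity)
          (Gamma_mul_rpow_le_Gamma_add hn hα)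
    _ = |x| / (α * n + c - 1) ^ α * (|x| ^ n / Gamma (α * n + c)) := by
        field_simp; ring
    _ ≤ 1 / 2 * (|x| ^ n / Gamma (α * n + c)) := by gcongr

end Real

theorem prod_range_natCast_add_eq_factorial_mul_choose (n k : ℕ) :
    ∏ i ∈ range k, (((n + 1 : ℕ) : ℝ) + i) = k ! * ((n + k).choose k : ℝ) := by
  rw [← Nat.cast_mul, ← Nat.ascFactorial_eq_factorial_mul_choose, Nat.ascFactorial_eq_prod_range]
  push_cast
  rfl

theorem prabhakar_one (α β z : ℝ) :
    prabhakar α β 1 z = ∑' n : ℕ, z ^ n / Real.Gamma (α * n + β) := by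
  refine tsum_congr fun n => ?_
  have hprod : ∏ i ∈ range n, ((1 : ℝ) + i) = n ! := by
    rw [← Finset.prod_range_add_one_eq_factorial]
    push_cast
    exact prod_congr rfl fun i _ => add_comm _ _
  rw [hprod, mul_div_mul_left _ _ (by positivity)]

/-- The `(n, k)` term of `∑ₙ wⁿ x^(n+1) E^{n+1}_{α,(n+1)α+1}(-x)` expanded as a double series,
with the sign `-1` replaced by `s` so that `|·|` of the family is again of this form. -/
noncomputable def mlBinomTerm (α w s x : ℝ) (nk : ℕ × ℕ) : ℝ :=
  w ^ nk.1 * s ^ nk.2 * ((nk.1 + nk.2).choose nk.2 : ℝ) * x ^ (nk.1 + nk.2 + 1) /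
    Real.Gamma (α * ((nk.1 + nk.2 + 1 : ℕ) : ℝ) + 1)

section mlBinomTerm

variable {α : ℝ}

theorem sum_antidiagonal_mlBinomTerm (α w s x : ℝ) (m : ℕ) :
    ∑ nk ∈ antidiagonal m, mlBinomTerm α w s x nk =
      (w + s) ^ m * x ^ (m + 1) / Real.Gamma (α * ((m + 1 : ℕ) : ℝ) + 1) := by
  rw [Nat.sum_antidiagonal_eq_sum_range_succ_mk, add_pow, sum_mul, sum_div]
  refine sum_congr rfl fun k hk => ?_
  have hkm : k + (m - k) = m := Nat.add_sub_cancel' (Nat.lt_succ_iff.mp (mem_range.mp hk))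
  simp only [mlBinomTerm, hkm, Nat.choose_symm (Nat.le.intro hkm)]

theorem abs_mlBinomTerm (hα : 0 ≤ α) (w s x : ℝ) (nk : ℕ × ℕ) :
    |mlBinomTerm α w s x nk| = mlBinomTerm α |w| |s| |x| nk := by
  have hΓ : 0 < Real.Gamma (α * ((nk.1 + nk.2 + 1 : ℕ) : ℝ) + 1) :=
    Real.Gamma_pos_of_pos (by positivity)
  simp only [mlBinomTerm, abs_div, abs_mul, abs_pow, Nat.abs_cast, abs_of_pos hΓ]

theorem mlBinomTerm_nonneg (hα : 0 ≤ α) {w s x : ℝ} (hw : 0 ≤ w) (hs : 0 ≤ s) (hx : 0 ≤ x)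
    (nk : ℕ × ℕ) : 0 ≤ mlBinomTerm α w s x nk := by
  unfold mlBinomTerm
  positivity

theorem summable_mlBinomTerm (hα : 0 < α) (w s x : ℝ) : Summable (mlBinomTerm α w s x) := by
  refine Summable.of_abs ?_
  simp only [abs_mlBinomTerm hα.le]
  refine summable_of_nonneg_of_summable_sum_antidiagonal
    (fun nk => mlBinomTerm_nonneg hα.le (abs_nonneg w) (abs_nonneg s) (abs_nonneg x) nk) ?_
  simp only [sum_antidiagonal_mlBinomTerm]
  have hgeom := Real.summable_pow_div_Gamma (c := α + 1) hα (by linarith) ((|w| + |s|) * |x|)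
  refine (hgeom.mul_left |x|).congr fun m => ?_
  rw [Nat.cast_succ, mul_add_one, add_assoc, mul_pow, pow_succ]
  ring

theorem tsum_mlBinomTerm_neg_one (α w x : ℝ) (n : ℕ) :
    ∑' k, mlBinomTerm α w (-1) x (n, k) =
      w ^ n * (x ^ (n + 1) *
        prabhakar α (((n + 1 : ℕ) : ℝ) * α + 1) ((n + 1 : ℕ) : ℝ) (-x)) := by
  rw [prabhakar, ← tsum_mul_left, ← tsum_mul_left]
  refine tsum_congr fun k => ?_
  have harg : α * (k : ℝ) + (((n + 1 : ℕ) : ℝ) * α + 1) = α * ((n + k + 1 : ℕ) : ℝ) + 1 := by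
    push_cast; ring
  rw [prod_range_natCast_add_eq_factorial_mul_choose, harg, mlBinomTerm]
  field_simp
  ring

end mlBinomTerm

/-- Identity (ii) with `x = λ t^α`, after a Riemann–Liouville integration of order `α` in `t`. -/
theorem tsum_pow_mul_prabhakar {α : ℝ} (hα : 0 < α) (w x : ℝ) :
    ∑' n : ℕ, w ^ n * (x ^ (n + 1) *
        prabhakar α (((n + 1 : ℕ) : ℝ) * α + 1) ((n + 1 : ℕ) : ℝ) (-x)) =
      x * prabhakar α (α + 1) 1 ((w - 1) * x) := by
  have hsum := summable_mlBinomTerm hα w (-1) x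
  simp only [← tsum_mlBinomTerm_neg_one, ← hsum.tsum_prod, hsum.tsum_eq_tsum_sum_antidiagonal,
    sum_antidiagonal_mlBinomTerm, prabhakar_one, ← tsum_mul_left]
  refine tsum_congr fun m => ?_
  rw [Nat.cast_succ, mul_add_one, add_assoc, mul_pow, pow_succ, ← sub_eq_add_neg]
  ring

theorem nhgfcp_first_jump_time (α : ℝ) (hα : α ∈ Set.Ioc (0 : ℝ) 1)
    (Λj Λ : ℝ) (h1 : 0 < Λj) (h2 : Λj ≤ Λ)
    (p : ℝ) (hp : p = Λj / Λ)
    (F : ℕ → ℝ)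
    (hF : ∀ n : ℕ, F n = Λ ^ ((n : ℝ) * α) * prabhakar α ((n : ℝ) * α + 1) (n : ℝ) (-(Λ ^ α))) :
    ∑' n : ℕ, F (n + 1) * p * (1 - p) ^ n
      = Λj * Λ ^ (α - 1) * prabhakar α (α + 1) 1 (-(Λj * Λ ^ (α - 1))) := by
  have hΛ : 0 < Λ := h1.trans_le h2
  have hF' : ∀ n : ℕ, F (n + 1) * p * (1 - p) ^ n = p * ((1 - p) ^ n * ((Λ ^ α) ^ (n + 1) *
      prabhakar α (((n + 1 : ℕ) : ℝ) * α + 1) ((n + 1 : ℕ) : ℝ) (-(Λ ^ α)))) := fun n => by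
    rw [hF, mul_comm _ α, Real.rpow_mul hΛ.le, Real.rpow_natCast]
    ring
  have hpx : p * Λ ^ α = Λj * Λ ^ (α - 1) := by
    rw [hp, Real.rpow_sub hΛ, Real.rpow_one]
    field_simp
  rw [tsum_congr hF', tsum_mul_left, tsum_pow_mul_prabhakar hα.1, ← mul_assoc, hpx,
    sub_sub_cancel_left, neg_mul, hpx]
end
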